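/- arXiv:0910.2147 — 8 statements merged into one kernel-verified Lean document; each statement's English description precedes it below -/
import Mathlib

section
/- Let (V₁ →d V₀, μ₀, μ₁, ν) be a 2-term representation up to homotopy of a Lie algebra 𝔤. Define on the complex V₁ →d (𝔤 ⊕ V₀) the brackets l₂(X+ξ, Y+η) = [X,Y] + μ₀(X)(η) − μ₀(Y)(ξ), l₂(X+ξ, f) = μ₁(X)(f), l₂(f,g) = 0 for f,g ∈ V₁, and l₃(X+ξ, Y+η, Z+γ) = −(ν(X,Y)(γ) + ν(Y,Z)(ξ) + ν(Z,X)(η)). Then (V₁ →d (𝔤 ⊕ V₀), l₂, l₃) is a 2-term L∞-algebra (Lie 2-algebra). -/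
/-!
All four identities are checked componentwise. The derivation property is `d ∘ μ₁ = μ₀ ∘ d`;
the `𝔤`-part of the Jacobiator identity is the Jacobi identity of `𝔤` and its `V₀`-part is the
failure `d ∘ ν` of `μ₀` to be a representation; the mixed Jacobi identity is the failure `ν ∘ d`
of `μ₁` to be one. The coherence law is linear in the four `V₀`-components, and its coefficient
of each of them is one instance of the cocycle condition on `ν`, for the three remaining
`𝔤`-components.
-/

namespace SemidirectLie2

variable {R 𝔤 V₀ V₁ : Type*} [CommRing R] [LieRing 𝔤] [Module R 𝔤]
  [AddCommGroup V₀] [Module R V₀] [AddCommGroup V₁] [Module R V₁]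

def diff (d : V₁ →ₗ[R] V₀) (f : V₁) : 𝔤 × V₀ := (0, d f)

def bracket (μ₀ : 𝔤 →ₗ[R] Module.End R V₀) (x y : 𝔤 × V₀) : 𝔤 × V₀ :=
  (⁅x.1, y.1⁆, μ₀ x.1 y.2 - μ₀ y.1 x.2)

def action (μ₁ : 𝔤 →ₗ[R] Module.End R V₁) (x : 𝔤 × V₀) (f : V₁) : V₁ := μ₁ x.1 f

def jacobiator (ν : 𝔤 → 𝔤 → V₀ →ₗ[R] V₁) (x y z : 𝔤 × V₀) : V₁ :=
  -(ν x.1 y.1 z.2 + ν y.1 z.1 x.2 + ν z.1 x.1 y.2)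

lemma apply_eq_of_sub_commutator_eq {M : Type*} [AddCommGroup M] [Module R M]
    {A B C E : Module.End R M} (h : A - (B * C - C * B) = E) (v : M) :
    A v = B (C v) - C (B v) + E v := by
  rw [← h]
  simp

lemma lie_lie_add_lie_lie_add_lie_lie (x y z : 𝔤) :
    ⁅⁅x, y⁆, z⁆ + ⁅⁅y, z⁆, x⁆ + ⁅⁅z, x⁆, y⁆ = 0 := by
  rw [← lie_skew ⁅x, y⁆ z, ← lie_skew ⁅y, z⁆ x, ← lie_skew ⁅z, x⁆ y, ← neg_add, ← neg_add,
    lie_jacobi z x y, neg_zero]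

variable {d : V₁ →ₗ[R] V₀} {μ₀ : 𝔤 →ₗ[R] Module.End R V₀} {μ₁ : 𝔤 →ₗ[R] Module.End R V₁}
  {ν : 𝔤 → 𝔤 → V₀ →ₗ[R] V₁}

lemma diff_action (hcompat : ∀ X, d ∘ₗ μ₁ X = μ₀ X ∘ₗ d) (x : 𝔤 × V₀) (f : V₁) :
    diff d (action μ₁ x f) = bracket μ₀ x (diff d f) := by
  simpa [diff, action, bracket] using LinearMap.congr_fun (hcompat x.1) f

lemma bracket_jacobi (hμ₀ : ∀ X Y, μ₀ ⁅X, Y⁆ - (μ₀ X * μ₀ Y - μ₀ Y * μ₀ X) = d ∘ₗ ν X Y)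
    (x y z : 𝔤 × V₀) :
    bracket μ₀ (bracket μ₀ x y) z + bracket μ₀ (bracket μ₀ y z) x + bracket μ₀ (bracket μ₀ z x) y
      = -diff d (jacobiator ν x y z) := by
  simp only [bracket, diff, jacobiator, Prod.mk_add_mk, Prod.neg_mk, neg_zero, Prod.mk.injEq,
    lie_lie_add_lie_lie_add_lie_lie, true_and]
  simp only [apply_eq_of_sub_commutator_eq (hμ₀ _ _), LinearMap.comp_apply, map_sub, map_add,
    map_neg]
  abel

lemma action_bracket_sub_commutator (hν_skew : ∀ X Y, ν X Y = -ν Y X)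
    (hν_lin : ∀ X, IsLinearMap R (ν X))
    (hμ₁ : ∀ X Y, μ₁ ⁅X, Y⁆ - (μ₁ X * μ₁ Y - μ₁ Y * μ₁ X) = ν X Y ∘ₗ d)
    (x y : 𝔤 × V₀) (f : V₁) :
    action μ₁ (bracket μ₀ x y) f - (action μ₁ x (action μ₁ y f) - action μ₁ y (action μ₁ x f))
      = -jacobiator ν x y (diff d f) := by
  have hν_zero : ∀ X, ν X 0 = 0 := fun X => (hν_lin X).map_zero
  have hν_zero' : ∀ X, ν 0 X = 0 := fun X => by rw [hν_skew, hν_zero, neg_zero]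
  simp only [action, bracket, jacobiator, diff, apply_eq_of_sub_commutator_eq (hμ₁ _ _),
    LinearMap.comp_apply, hν_zero, hν_zero', LinearMap.zero_apply, add_zero, neg_neg]
  abel

lemma jacobiator_coherence (hν_skew : ∀ X Y, ν X Y = -ν Y X)
    (hν_lin : ∀ X, IsLinearMap R (ν X))
    (hcoc : ∀ X₁ X₂ X₃,
      (μ₁ X₁ ∘ₗ ν X₂ X₃ - ν X₂ X₃ ∘ₗ μ₀ X₁) + (μ₁ X₂ ∘ₗ ν X₃ X₁ - ν X₃ X₁ ∘ₗ μ₀ X₂)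
        + (μ₁ X₃ ∘ₗ ν X₁ X₂ - ν X₁ X₂ ∘ₗ μ₀ X₃)
      = ν ⁅X₁, X₂⁆ X₃ + ν ⁅X₂, X₃⁆ X₁ + ν ⁅X₃, X₁⁆ X₂)
    (x y z w : 𝔤 × V₀) :
    action μ₁ x (jacobiator ν y z w) - action μ₁ y (jacobiator ν x z w)
        + action μ₁ z (jacobiator ν x y w) - action μ₁ w (jacobiator ν x y z)
      = jacobiator ν (bracket μ₀ x y) z w - jacobiator ν (bracket μ₀ x z) y w
        + jacobiator ν (bracket μ₀ x w) y z + jacobiator ν (bracket μ₀ y z) x w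
        - jacobiator ν (bracket μ₀ y w) x z + jacobiator ν (bracket μ₀ z w) x y := by
  obtain ⟨X, ξ⟩ := x
  obtain ⟨Y, η⟩ := y
  obtain ⟨Z, γ⟩ := z
  obtain ⟨W, ω⟩ := w
  have hν_lie_swap : ∀ A B C, ν ⁅B, A⁆ C = -ν ⁅A, B⁆ C := fun A B C => by
    rw [hν_skew ⁅B, A⁆, hν_skew ⁅A, B⁆, ← lie_skew A B, (hν_lin C).map_neg, neg_neg]
  have cocycle : ∀ A B C v, μ₁ A (ν B C v) - ν B C (μ₀ A v) + (μ₁ B (ν C A v) - ν C A (μ₀ B v))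
      + (μ₁ C (ν A B v) - ν A B (μ₀ C v)) = ν ⁅A, B⁆ C v + ν ⁅B, C⁆ A v + ν ⁅C, A⁆ B v :=
    fun A B C v => by simpa using LinearMap.congr_fun (hcoc A B C) v
  simp only [action, bracket, jacobiator, map_add, map_neg, map_sub, neg_add_rev]
  rw [hν_skew W Y, hν_skew W X, hν_skew Z X, hν_skew W ⁅X, Y⁆, hν_skew W ⁅X, Z⁆,
    hν_skew Z ⁅X, W⁆, hν_skew W ⁅Y, Z⁆, hν_skew Z ⁅Y, W⁆, hν_skew Y ⁅Z, W⁆]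
  have c₁ := cocycle X Y Z ω
  have c₂ := cocycle Y Z W ξ
  have c₃ := cocycle X Z W η
  have c₄ := cocycle X Y W γ
  rw [hν_skew Z X, hν_lie_swap X Z Y] at c₁
  rw [hν_skew W Y, hν_lie_swap Y W Z] at c₂
  rw [hν_skew W X, hν_lie_swap X W Z] at c₃
  rw [hν_skew W X, hν_lie_swap X W Y] at c₄
  simp only [LinearMap.neg_apply, map_neg, neg_neg] at c₁ c₂ c₃ c₄ ⊢
  linear_combination (norm := abel1) c₄ + c₂ - c₁ - c₃

end SemidirectLie2

open SemidirectLie2 in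
/-- Semidirect product of a Lie algebra with a 2-term representation up to
homotopy is a 2-term `L∞`-algebra (Lie 2-algebra). -/
theorem semidirect_product_is_lie2algebra
    {𝔤 V₀ V₁ : Type} [LieRing 𝔤] [LieAlgebra ℝ 𝔤]
    [AddCommGroup V₀] [Module ℝ V₀] [AddCommGroup V₁] [Module ℝ V₁]
    (d : V₁ →ₗ[ℝ] V₀)
    (μ₀ : 𝔤 →ₗ[ℝ] Module.End ℝ V₀) (μ₁ : 𝔤 →ₗ[ℝ] Module.End ℝ V₁)
    (ν : 𝔤 → 𝔤 → (V₀ →ₗ[ℝ] V₁))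
    (hν_skew : ∀ X Y, ν X Y = - ν Y X)
    (hν_lin : ∀ X, IsLinearMap ℝ (ν X))
    (hcompat : ∀ X, d ∘ₗ (μ₁ X) = (μ₀ X) ∘ₗ d)
    (hμ₀ : ∀ X Y, μ₀ ⁅X, Y⁆ - (μ₀ X * μ₀ Y - μ₀ Y * μ₀ X) = d ∘ₗ (ν X Y))
    (hμ₁ : ∀ X Y, μ₁ ⁅X, Y⁆ - (μ₁ X * μ₁ Y - μ₁ Y * μ₁ X) = (ν X Y) ∘ₗ d)
    (hcoc : ∀ X₁ X₂ X₃,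
      ((μ₁ X₁) ∘ₗ (ν X₂ X₃) - (ν X₂ X₃) ∘ₗ (μ₀ X₁))
      + ((μ₁ X₂) ∘ₗ (ν X₃ X₁) - (ν X₃ X₁) ∘ₗ (μ₀ X₂))
      + ((μ₁ X₃) ∘ₗ (ν X₁ X₂) - (ν X₁ X₂) ∘ₗ (μ₀ X₃))
      = ν ⁅X₁, X₂⁆ X₃ + ν ⁅X₂, X₃⁆ X₁ + ν ⁅X₃, X₁⁆ X₂)
    -- the differential of the semidirect product complex V₁ → 𝔤 ⊕ V₀
    (D : V₁ → 𝔤 × V₀) (hD : ∀ f, D f = (0, d f))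
    -- the bracket l₂ on degree-0 elements
    (l2 : 𝔤 × V₀ → 𝔤 × V₀ → 𝔤 × V₀)
    (hl2 : ∀ x y, l2 x y = (⁅x.1, y.1⁆, μ₀ x.1 y.2 - μ₀ y.1 x.2))
    -- the bracket l₂ of a degree-0 and a degree-1 element
    (l2m : 𝔤 × V₀ → V₁ → V₁)
    (hl2m : ∀ x f, l2m x f = μ₁ x.1 f)
    -- the Jacobiator l₃
    (l3 : 𝔤 × V₀ → 𝔤 × V₀ → 𝔤 × V₀ → V₁)
    (hl3 : ∀ x y z, l3 x y z = -(ν x.1 y.1 z.2 + ν y.1 z.1 x.2 + ν z.1 x.1 y.2)) :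
    -- d is a derivation with respect to l₂
    (∀ x f, D (l2m x f) = l2 x (D f)) ∧
    -- the Jacobiator identity in degree 0
    (∀ x y z, l2 (l2 x y) z + l2 (l2 y z) x + l2 (l2 z x) y = - D (l3 x y z)) ∧
    -- the mixed Jacobi identity
    (∀ x y f, l2m (l2 x y) f - (l2m x (l2m y f) - l2m y (l2m x f))
        = - l3 x y (D f)) ∧
    -- the coherence law for l₃
    (∀ x y z w,
      l2m x (l3 y z w) - l2m y (l3 x z w) + l2m z (l3 x y w) - l2m w (l3 x y z)
      = l3 (l2 x y) z w - l3 (l2 x z) y w + l3 (l2 x w) y z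
        + l3 (l2 y z) x w - l3 (l2 y w) x z + l3 (l2 z w) x y) := by
  obtain rfl : D = diff d := funext hD
  obtain rfl : l2 = bracket μ₀ := funext₂ hl2
  obtain rfl : l2m = action μ₁ := funext₂ hl2m
  obtain rfl : l3 = jacobiator ν := funext₃ hl3
  exact ⟨diff_action hcompat, bracket_jacobi hμ₀, action_bracket_sub_commutator hν_skew hν_lin hμ₁,
    jacobiator_coherence hν_skew hν_lin hcoc⟩
end

section
/- With the semidirect product brackets l₂(X+ξ, Y+η) = [X,Y] + μ₀(X)(η) − μ₀(Y)(ξ) defined from a 2-term representation up to homotopy (V₁ →d V₀, μ₀, μ₁, ν) of a Lie algebra 𝔤, the failure of the Jacobi identity on degree-0 elements is: l₂(l₂(X+ξ, Y+η), Z+γ) + c.p. = d(ν(X,Y)(γ)) + d(ν(Y,Z)(ξ)) + d(ν(Z,X)(η)). -/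
/-!
The `𝔤`-component of the Jacobiator vanishes by the Jacobi identity of `𝔤`. In the
`V₀`-component the quadratic terms `μ₀(X) μ₀(Y) γ` cancel in pairs, leaving the curvature
`μ₀ ⁅X, Y⁆ - ⁅μ₀ X, μ₀ Y⁆` of `μ₀` applied cyclically, and the homotopy condition on `μ₀`
identifies this curvature with `d ∘ ν`.
-/

section SemidirectBracket

variable {R L M : Type*} [CommRing R] [LieRing L] [AddCommGroup M] [Module R M]

def semidirectBracket (μ : L → Module.End R M) (x y : L × M) : L × M :=
  (⁅x.1, y.1⁆, μ x.1 y.2 - μ y.1 x.2)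

def curvature (μ : L → Module.End R M) (X Y : L) : Module.End R M :=
  μ ⁅X, Y⁆ - ⁅μ X, μ Y⁆

theorem lie_lie_add_lie_lie_add_lie_lie (X Y Z : L) :
    ⁅⁅X, Y⁆, Z⁆ + ⁅⁅Y, Z⁆, X⁆ + ⁅⁅Z, X⁆, Y⁆ = 0 := by
  rw [← lie_skew ⁅X, Y⁆ Z, ← lie_skew ⁅Y, Z⁆ X, ← lie_skew ⁅Z, X⁆ Y]
  linear_combination (norm := abel) -lie_jacobi X Y Z

theorem semidirectBracket_jacobiator (μ : L → Module.End R M) (X Y Z : L) (ξ η γ : M) :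
    semidirectBracket μ (semidirectBracket μ (X, ξ) (Y, η)) (Z, γ)
        + semidirectBracket μ (semidirectBracket μ (Y, η) (Z, γ)) (X, ξ)
        + semidirectBracket μ (semidirectBracket μ (Z, γ) (X, ξ)) (Y, η)
      = (0, curvature μ X Y γ + curvature μ Y Z ξ + curvature μ Z X η) := by
  simp only [semidirectBracket, curvature, Prod.mk_add_mk, lie_lie_add_lie_lie_add_lie_lie,
    Ring.lie_def, map_sub, LinearMap.sub_apply, Module.End.mul_apply]
  congr 1
  abel

end SemidirectBracket

theorem semidirect_jacobi_failure_general
    {𝔤 V₀ V₁ : Type} [LieRing 𝔤] [LieAlgebra ℝ 𝔤]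
    [AddCommGroup V₀] [Module ℝ V₀] [AddCommGroup V₁] [Module ℝ V₁]
    (d : V₁ →ₗ[ℝ] V₀)
    (μ₀ : 𝔤 →ₗ[ℝ] Module.End ℝ V₀)
    (ν : 𝔤 → 𝔤 → (V₀ →ₗ[ℝ] V₁))
    (hμ₀ : ∀ X Y, μ₀ ⁅X, Y⁆ - (μ₀ X * μ₀ Y - μ₀ Y * μ₀ X) = d ∘ₗ (ν X Y))
    (l2 : 𝔤 × V₀ → 𝔤 × V₀ → 𝔤 × V₀)
    (hl2 : ∀ x y, l2 x y = (⁅x.1, y.1⁆, μ₀ x.1 y.2 - μ₀ y.1 x.2)) :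
    ∀ (X Y Z : 𝔤) (ξ η γ : V₀),
      l2 (l2 (X, ξ) (Y, η)) (Z, γ) + l2 (l2 (Y, η) (Z, γ)) (X, ξ)
        + l2 (l2 (Z, γ) (X, ξ)) (Y, η)
      = (0, d (ν X Y γ) + d (ν Y Z ξ) + d (ν Z X η)) := by
  intro X Y Z ξ η γ
  have hl2 : l2 = semidirectBracket μ₀ := funext₂ hl2
  have hcurv : ∀ A B, curvature μ₀ A B = d ∘ₗ ν A B := fun A B => by
    rw [curvature, Ring.lie_def]
    exact hμ₀ A B
  rw [hl2, semidirectBracket_jacobiator, hcurv, hcurv, hcurv]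
  rfl

/-- The failure of the Jacobi identity for the semidirect product bracket `l₂`
on degree-0 elements is measured by `d ∘ ν`. -/
theorem semidirect_jacobi_failure
    {𝔤 V₀ V₁ : Type} [LieRing 𝔤] [LieAlgebra ℝ 𝔤]
    [AddCommGroup V₀] [Module ℝ V₀] [AddCommGroup V₁] [Module ℝ V₁]
    (d : V₁ →ₗ[ℝ] V₀)
    (μ₀ : 𝔤 →ₗ[ℝ] Module.End ℝ V₀) (μ₁ : 𝔤 →ₗ[ℝ] Module.End ℝ V₁)
    (ν : 𝔤 → 𝔤 → (V₀ →ₗ[ℝ] V₁))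
    (hν_skew : ∀ X Y, ν X Y = - ν Y X)
    (hcompat : ∀ X, d ∘ₗ (μ₁ X) = (μ₀ X) ∘ₗ d)
    (hμ₀ : ∀ X Y, μ₀ ⁅X, Y⁆ - (μ₀ X * μ₀ Y - μ₀ Y * μ₀ X) = d ∘ₗ (ν X Y))
    (hμ₁ : ∀ X Y, μ₁ ⁅X, Y⁆ - (μ₁ X * μ₁ Y - μ₁ Y * μ₁ X) = (ν X Y) ∘ₗ d)
    (hcoc : ∀ X₁ X₂ X₃,
      ((μ₁ X₁) ∘ₗ (ν X₂ X₃) - (ν X₂ X₃) ∘ₗ (μ₀ X₁))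
      + ((μ₁ X₂) ∘ₗ (ν X₃ X₁) - (ν X₃ X₁) ∘ₗ (μ₀ X₂))
      + ((μ₁ X₃) ∘ₗ (ν X₁ X₂) - (ν X₁ X₂) ∘ₗ (μ₀ X₃))
      = ν ⁅X₁, X₂⁆ X₃ + ν ⁅X₂, X₃⁆ X₁ + ν ⁅X₃, X₁⁆ X₂)
    (l2 : 𝔤 × V₀ → 𝔤 × V₀ → 𝔤 × V₀)
    (hl2 : ∀ x y, l2 x y = (⁅x.1, y.1⁆, μ₀ x.1 y.2 - μ₀ y.1 x.2)) :
    ∀ (X Y Z : 𝔤) (ξ η γ : V₀),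
      l2 (l2 (X, ξ) (Y, η)) (Z, γ) + l2 (l2 (Y, η) (Z, γ)) (X, ξ)
        + l2 (l2 (Z, γ) (X, ξ)) (Y, η)
      = (0, d (ν X Y γ) + d (ν Y Z ξ) + d (ν Z X η)) :=
  semidirect_jacobi_failure_general d μ₀ ν hμ₀ l2 hl2
end

section
/- Let 𝔤 be a Lie algebra, let the complex be ℝ →0 𝔤* with μ₁ = 0, μ₀ = ad* (the coadjoint representation), and ν(X,Y) ∈ Hom(𝔤*, ℝ) given by ν(X,Y)(ξ) = ξ([X,Y]). Then (ℝ →0 𝔤*, μ₀, μ₁, ν) is a 2-term representation up to homotopy of 𝔤. -/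
/-! With `d = 0` and `μ₁ = 0`, the conditions reduce to identities in `𝔤`: `ad*` is a
representation because `ad` is one (the Jacobi identity in the form `lie_lie`), and after
unfolding `ad*` and `ν` both sides of the cocycle condition are `ξ` applied to a cyclic
Jacobi sum, hence vanish. -/

section Jacobi

variable {L M F : Type*} [LieRing L] [AddCommGroup M] [FunLike F L M] [AddMonoidHomClass F L M]

theorem lie_lie_jacobi (x y z : L) : ⁅⁅x, y⁆, z⁆ + ⁅⁅y, z⁆, x⁆ + ⁅⁅z, x⁆, y⁆ = 0 := by
  calc ⁅⁅x, y⁆, z⁆ + ⁅⁅y, z⁆, x⁆ + ⁅⁅z, x⁆, y⁆ = -(⁅x, ⁅y, z⁆⁆ + ⁅y, ⁅z, x⁆⁆ + ⁅z, ⁅x, y⁆⁆) := by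
        rw [← lie_skew ⁅x, y⁆ z, ← lie_skew ⁅y, z⁆ x, ← lie_skew ⁅z, x⁆ y]
        abel
    _ = 0 := by rw [lie_jacobi, neg_zero]

theorem map_lie_jacobi (f : F) (x y z : L) :
    f ⁅x, ⁅y, z⁆⁆ + f ⁅y, ⁅z, x⁆⁆ + f ⁅z, ⁅x, y⁆⁆ = 0 := by
  rw [← map_add, ← map_add, lie_jacobi, map_zero]

theorem map_lie_lie_jacobi (f : F) (x y z : L) :
    f ⁅⁅x, y⁆, z⁆ + f ⁅⁅y, z⁆, x⁆ + f ⁅⁅z, x⁆, y⁆ = 0 := by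
  rw [← map_add, ← map_add, lie_lie_jacobi, map_zero]

end Jacobi

theorem coadjoint_lie {R L : Type*} [CommRing R] [LieRing L] [LieAlgebra R L]
    {coad : L → Module.Dual R L → Module.Dual R L}
    (hcoad : ∀ (X Y : L) (ξ : Module.Dual R L), coad X ξ Y = -ξ ⁅X, Y⁆)
    (X Y : L) (ξ : Module.Dual R L) :
    coad ⁅X, Y⁆ ξ = coad X (coad Y ξ) - coad Y (coad X ξ) := by
  ext Z
  simp only [LinearMap.sub_apply, hcoad, neg_neg, lie_lie, map_sub]
  abel

/-- `(ℝ →0 𝔤*, μ₀ = ad*, μ₁ = 0, ν(X,Y)(ξ) = ξ([X,Y]))` is a 2-term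
representation up to homotopy of the Lie algebra `𝔤`. -/
theorem coadjoint_rep_up_to_homotopy
    {𝔤 : Type} [LieRing 𝔤] [LieAlgebra ℝ 𝔤]
    -- the coadjoint action μ₀ = ad*
    (coad : 𝔤 → Module.Dual ℝ 𝔤 → Module.Dual ℝ 𝔤)
    (hcoad : ∀ (X Y : 𝔤) (ξ : Module.Dual ℝ 𝔤), coad X ξ Y = - ξ ⁅X, Y⁆)
    -- μ₁ = 0 on V₁ = ℝ
    (μ₁ : 𝔤 → ℝ → ℝ) (hμ₁ : ∀ X c, μ₁ X c = 0)
    -- ν : ∧²𝔤 → Hom(𝔤*, ℝ)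
    (ν : 𝔤 → 𝔤 → Module.Dual ℝ 𝔤 → ℝ)
    (hν : ∀ (X Y : 𝔤) (ξ : Module.Dual ℝ 𝔤), ν X Y ξ = ξ ⁅X, Y⁆) :
    -- μ₀ = ad* is a strict representation of 𝔤 on 𝔤*
    (∀ (X Y : 𝔤) (ξ : Module.Dual ℝ 𝔤),
      coad ⁅X, Y⁆ ξ = coad X (coad Y ξ) - coad Y (coad X ξ)) ∧
    -- μ₁ = 0 is a strict representation of 𝔤 on ℝ
    (∀ (X Y : 𝔤) (c : ℝ),
      μ₁ ⁅X, Y⁆ c = μ₁ X (μ₁ Y c) - μ₁ Y (μ₁ X c)) ∧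
    -- the cocycle-type condition [μ(X₁), ν(X₂,X₃)] + c.p. = ν([X₁,X₂],X₃) + c.p.
    (∀ (X₁ X₂ X₃ : 𝔤) (ξ : Module.Dual ℝ 𝔤),
      (μ₁ X₁ (ν X₂ X₃ ξ) - ν X₂ X₃ (coad X₁ ξ))
        + (μ₁ X₂ (ν X₃ X₁ ξ) - ν X₃ X₁ (coad X₂ ξ))
        + (μ₁ X₃ (ν X₁ X₂ ξ) - ν X₁ X₂ (coad X₃ ξ))
      = ν ⁅X₁, X₂⁆ X₃ ξ + ν ⁅X₂, X₃⁆ X₁ ξ + ν ⁅X₃, X₁⁆ X₂ ξ) := by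
  refine ⟨coadjoint_lie hcoad, fun X Y c => by simp only [hμ₁, sub_zero], ?_⟩
  intro X₁ X₂ X₃ ξ
  simp only [hμ₁, hν, hcoad, zero_sub, neg_neg]
  rw [map_lie_jacobi, map_lie_lie_jacobi]
end

section
/- Let G be a group and (V₁ →d V₀, F₁, F₂) a unital 2-term representation up to homotopy of G in which F₁ is a genuine (associative) action. Define the semidirect product group G ⋉ V₀ with (g₁,ξ₁)·(g₂,ξ₂) = (g₁g₂, ξ₁ + F₁(g₁)(ξ₂)), let it act on V₁ by F̃₁(g,ξ)(m) = F₁(g)(m), and define F̃₂: (G⋉V₀)³ → V₁ by F̃₂((g₁,ξ₁),(g₂,ξ₂),(g₃,ξ₃)) = F₂(g₁,g₂)(ξ₃). Then F̃₂ is a group 3-cocycle: its group-cohomology differential vanishes. -/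
/-! The differential of `F̃₂` only sees the `V₀`-coordinates through the last slot, where `F₂(g₁,g₂)`
is additive: the term `F̃₂(x₁, x₂, x₃x₄) = F₂(g₁,g₂)(ξ₃ + F₁(g₃)ξ₄)` cancels against `F̃₂(x₁, x₂, x₃)`
up to `F₂(g₁,g₂)(F₁(g₃)ξ₄)`. What remains is the structure equation of `F₂` evaluated at `ξ₄`. -/

theorem semidirect_coboundary_eq_structure_equation_apply {R G V₀ V₁ : Type*} [Ring R] [Mul G]
    [AddCommGroup V₀] [Module R V₀] [AddCommGroup V₁] [Module R V₁]
    (F₁₀ : G → Module.End R V₀) (F₁₁ : G → Module.End R V₁) (F₂ : G → G → V₀ →ₗ[R] V₁)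
    (g₁ g₂ g₃ : G) (ξ₃ ξ₄ : V₀) :
    F₁₁ g₁ (F₂ g₂ g₃ ξ₄) - F₂ (g₁ * g₂) g₃ ξ₄ + F₂ g₁ (g₂ * g₃) ξ₄
        - F₂ g₁ g₂ (ξ₃ + F₁₀ g₃ ξ₄) + F₂ g₁ g₂ ξ₃ =
      (F₁₁ g₁ ∘ₗ F₂ g₂ g₃ - F₂ (g₁ * g₂) g₃ + F₂ g₁ (g₂ * g₃) - F₂ g₁ g₂ ∘ₗ F₁₀ g₃) ξ₄ := by
  simp only [map_add, LinearMap.sub_apply, LinearMap.add_apply, LinearMap.comp_apply]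
  abel

theorem Ftilde2_is_group_three_cocycle_general
    {G : Type} [Group G] {V₀ V₁ : Type}
    [AddCommGroup V₀] [Module ℝ V₀] [AddCommGroup V₁] [Module ℝ V₁]
    -- the action F₁ on V₀ and V₁ is a genuine (associative, unital) action
    (F₁₀ : G → Module.End ℝ V₀) (F₁₁ : G → Module.End ℝ V₁)
    -- F₂ and the structure equations of a representation up to homotopy
    (F₂ : G → G → (V₀ →ₗ[ℝ] V₁))
    (hclosed : ∀ g₁ g₂ g₃,
      (F₁₁ g₁) ∘ₗ F₂ g₂ g₃ - F₂ (g₁ * g₂) g₃ + F₂ g₁ (g₂ * g₃)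
        - F₂ g₁ g₂ ∘ₗ (F₁₀ g₃) = 0)
    -- the semidirect product group G ⋉ V₀
    (m : G × V₀ → G × V₀ → G × V₀)
    (hm : ∀ (g₁ g₂ : G) (ξ₁ ξ₂ : V₀),
      m (g₁, ξ₁) (g₂, ξ₂) = (g₁ * g₂, ξ₁ + F₁₀ g₁ ξ₂))
    -- the 3-cochain F̃₂ on G ⋉ V₀ with values in V₁
    (F₂' : G × V₀ → G × V₀ → G × V₀ → V₁)
    (hF₂' : ∀ x₁ x₂ x₃ : G × V₀, F₂' x₁ x₂ x₃ = F₂ x₁.1 x₂.1 x₃.2) :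
    -- the group-cohomology differential of F̃₂ vanishes
    ∀ x₁ x₂ x₃ x₄ : G × V₀,
      F₁₁ x₁.1 (F₂' x₂ x₃ x₄) - F₂' (m x₁ x₂) x₃ x₄ + F₂' x₁ (m x₂ x₃) x₄
        - F₂' x₁ x₂ (m x₃ x₄) + F₂' x₁ x₂ x₃ = 0 := by
  rintro ⟨g₁, ξ₁⟩ ⟨g₂, ξ₂⟩ ⟨g₃, ξ₃⟩ ⟨g₄, ξ₄⟩
  simp only [hF₂', hm]
  rw [semidirect_coboundary_eq_structure_equation_apply, hclosed, LinearMap.zero_apply]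

/-- If `(V₁ →d V₀, F₁, F₂)` is a unital 2-term representation up to homotopy of
a group `G` in which `F₁` is a genuine (associative) action, then
`F̃₂((g₁,ξ₁),(g₂,ξ₂),(g₃,ξ₃)) = F₂(g₁,g₂)(ξ₃)` is a group 3-cocycle on the
semidirect product `G ⋉ V₀` with values in `V₁`. -/
theorem Ftilde2_is_group_three_cocycle
    {G : Type} [Group G] {V₀ V₁ : Type}
    [AddCommGroup V₀] [Module ℝ V₀] [AddCommGroup V₁] [Module ℝ V₁]
    (d : V₁ →ₗ[ℝ] V₀)
    -- the action F₁ on V₀ and V₁ is a genuine (associative, unital) action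
    (F₁₀ : G → Module.End ℝ V₀) (F₁₁ : G → Module.End ℝ V₁)
    (hF₁₀_one : F₁₀ 1 = 1) (hF₁₁_one : F₁₁ 1 = 1)
    (hF₁₀_mul : ∀ g₁ g₂, F₁₀ (g₁ * g₂) = F₁₀ g₁ * F₁₀ g₂)
    (hF₁₁_mul : ∀ g₁ g₂, F₁₁ (g₁ * g₂) = F₁₁ g₁ * F₁₁ g₂)
    (hcompat : ∀ g, d ∘ₗ (F₁₁ g) = (F₁₀ g) ∘ₗ d)
    -- F₂ and the structure equations of a representation up to homotopy
    (F₂ : G → G → (V₀ →ₗ[ℝ] V₁))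
    (hfail₀ : ∀ g₁ g₂, F₁₀ g₁ * F₁₀ g₂ - F₁₀ (g₁ * g₂) = d ∘ₗ F₂ g₁ g₂)
    (hfail₁ : ∀ g₁ g₂, F₁₁ g₁ * F₁₁ g₂ - F₁₁ (g₁ * g₂) = F₂ g₁ g₂ ∘ₗ d)
    (hclosed : ∀ g₁ g₂ g₃,
      (F₁₁ g₁) ∘ₗ F₂ g₂ g₃ - F₂ (g₁ * g₂) g₃ + F₂ g₁ (g₂ * g₃)
        - F₂ g₁ g₂ ∘ₗ (F₁₀ g₃) = 0)
    -- the semidirect product group G ⋉ V₀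
    (m : G × V₀ → G × V₀ → G × V₀)
    (hm : ∀ (g₁ g₂ : G) (ξ₁ ξ₂ : V₀),
      m (g₁, ξ₁) (g₂, ξ₂) = (g₁ * g₂, ξ₁ + F₁₀ g₁ ξ₂))
    -- the 3-cochain F̃₂ on G ⋉ V₀ with values in V₁
    (F₂' : G × V₀ → G × V₀ → G × V₀ → V₁)
    (hF₂' : ∀ x₁ x₂ x₃ : G × V₀, F₂' x₁ x₂ x₃ = F₂ x₁.1 x₂.1 x₃.2) :
    -- the group-cohomology differential of F̃₂ vanishes
    ∀ x₁ x₂ x₃ x₄ : G × V₀,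
      F₁₁ x₁.1 (F₂' x₂ x₃ x₄) - F₂' (m x₁ x₂) x₃ x₄ + F₂' x₁ (m x₂ x₃) x₄
        - F₂' x₁ x₂ (m x₃ x₄) + F₂' x₁ x₂ x₃ = 0 :=
  Ftilde2_is_group_three_cocycle_general F₁₀ F₁₁ F₂ hclosed m hm F₂' hF₂'
end

section
/- Let G be a group, V₀, V₁ modules with G acting through a homomorphism F₁, and suppose the 2-cocycle F̄₂: G² → Hom(V₀,V₁) is exact: F̄₂(g₁,g₂) = F₁(g₁)α(g₂)F₁(g₁)⁻¹ − α(g₁g₂) + α(g₁) for some α: G → Hom(V₀,V₁). Define F₂(g₁,g₂) = F̄₂(g₁,g₂)∘F₁(g₁g₂) and the 3-cochain F̃₂ on G ⋉ V₀ by F̃₂((g₁,ξ₁),(g₂,ξ₂),(g₃,ξ₃)) = F₂(g₁,g₂)(ξ₃). Then F̃₂ is an exact group 3-cocycle: F̃₂ = dβ where β((g₁,ξ₁),(g₂,ξ₂)) = α(g₁)(F₁(g₁)(ξ₂)). -/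
/-!
Write `γ g = α g ∘ F₁(g)`, so that `β((g₁,ξ₁),(g₂,ξ₂)) = γ(g₁)(ξ₂)`. Since `F₁(g₁⁻¹) F₁(g₁g₂) = F₁(g₂)`,
composing the exactness relation with `F₁(g₁g₂)` expresses `F₂(g₁,g₂)` as the coboundary of `γ`
for the `G`-bimodule `Hom(V₀,V₁)` (acting by `F₁` on the left and on the right). Expanding `dβ`
with the semidirect multiplication, the terms in `ξ₂` cancel and what remains is that same
coboundary applied to `ξ₃`.
-/

section TwistedCoboundary

variable {G R V₀ V₁ : Type*} [Semiring R] [AddCommGroup V₀] [Module R V₀]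
  [AddCommGroup V₁] [Module R V₁]

/-- Coboundary of a 1-cochain with values in the `G`-bimodule `Hom(V₀, V₁)`, where `ρ₁` acts on
the left and `ρ₀` on the right. -/
def twistedCoboundary [Mul G] (ρ₀ : G → Module.End R V₀) (ρ₁ : G → Module.End R V₁)
    (γ : G → V₀ →ₗ[R] V₁) (g₁ g₂ : G) : V₀ →ₗ[R] V₁ :=
  ρ₁ g₁ ∘ₗ γ g₂ - γ (g₁ * g₂) + γ g₁ ∘ₗ ρ₀ g₂

theorem twistedCoboundary_apply_eq_semidirect [Mul G] (ρ₀ : G → Module.End R V₀)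
    (ρ₁ : G → Module.End R V₁) (γ : G → V₀ →ₗ[R] V₁) (g₁ g₂ : G) (ξ₂ ξ₃ : V₀) :
    twistedCoboundary ρ₀ ρ₁ γ g₁ g₂ ξ₃
      = ρ₁ g₁ (γ g₂ ξ₃) - γ (g₁ * g₂) ξ₃ + γ g₁ (ξ₂ + ρ₀ g₂ ξ₃) - γ g₁ ξ₂ := by
  simp only [twistedCoboundary, LinearMap.add_apply, LinearMap.sub_apply, LinearMap.comp_apply,
    map_add]
  abel

theorem conj_coboundary_comp_eq_twistedCoboundary [Group G] (ρ₀ : G → Module.End R V₀)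
    (ρ₁ : G → Module.End R V₁) (hρ₀ : ∀ g₁ g₂, ρ₀ (g₁ * g₂) = ρ₀ g₁ * ρ₀ g₂)
    (α : G → V₀ →ₗ[R] V₁) (g₁ g₂ : G) :
    (ρ₁ g₁ ∘ₗ α g₂ ∘ₗ ρ₀ g₁⁻¹ - α (g₁ * g₂) + α g₁) ∘ₗ ρ₀ (g₁ * g₂)
      = twistedCoboundary ρ₀ ρ₁ (fun g ↦ α g ∘ₗ ρ₀ g) g₁ g₂ := by
  have hcancel : ρ₀ g₁⁻¹ * ρ₀ (g₁ * g₂) = ρ₀ g₂ := by rw [← hρ₀, inv_mul_cancel_left]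
  simp only [twistedCoboundary, LinearMap.sub_comp, LinearMap.add_comp, LinearMap.comp_assoc,
    ← Module.End.mul_eq_comp, hcancel]
  rw [hρ₀]

end TwistedCoboundary

theorem Ftilde2_exact_of_F2bar_exact_general
    {G : Type} [Group G] {V₀ V₁ : Type}
    [AddCommGroup V₀] [Module ℝ V₀] [AddCommGroup V₁] [Module ℝ V₁]
    -- the genuine actions F₁ on V₀ and V₁
    (F₁₀ : G → Module.End ℝ V₀) (F₁₁ : G → Module.End ℝ V₁)
    (hF₁₀_mul : ∀ g₁ g₂, F₁₀ (g₁ * g₂) = F₁₀ g₁ * F₁₀ g₂)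
    -- F̄₂ is exact: F̄₂ = dα
    (α : G → (V₀ →ₗ[ℝ] V₁))
    (F₂bar : G → G → (V₀ →ₗ[ℝ] V₁))
    (hexact : ∀ g₁ g₂, F₂bar g₁ g₂
      = (F₁₁ g₁) ∘ₗ (α g₂) ∘ₗ (F₁₀ g₁⁻¹) - α (g₁ * g₂) + α g₁)
    -- F₂ and the 3-cochain F̃₂ on the semidirect product G ⋉ V₀
    (F₂ : G → G → (V₀ →ₗ[ℝ] V₁))
    (hF₂ : ∀ g₁ g₂, F₂ g₁ g₂ = (F₂bar g₁ g₂) ∘ₗ (F₁₀ (g₁ * g₂)))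
    (m : G × V₀ → G × V₀ → G × V₀)
    (hm : ∀ (g₁ g₂ : G) (ξ₁ ξ₂ : V₀),
      m (g₁, ξ₁) (g₂, ξ₂) = (g₁ * g₂, ξ₁ + F₁₀ g₁ ξ₂))
    (F₂' : G × V₀ → G × V₀ → G × V₀ → V₁)
    (hF₂' : ∀ x₁ x₂ x₃ : G × V₀, F₂' x₁ x₂ x₃ = F₂ x₁.1 x₂.1 x₃.2)
    -- the 2-cochain β
    (β : G × V₀ → G × V₀ → V₁)
    (hβ : ∀ x₁ x₂ : G × V₀, β x₁ x₂ = α x₁.1 (F₁₀ x₁.1 x₂.2)) :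
    -- F̃₂ = dβ
    ∀ x₁ x₂ x₃ : G × V₀,
      F₂' x₁ x₂ x₃
        = F₁₁ x₁.1 (β x₂ x₃) - β (m x₁ x₂) x₃ + β x₁ (m x₂ x₃) - β x₁ x₂ := by
  rintro ⟨g₁, ξ₁⟩ ⟨g₂, ξ₂⟩ ⟨g₃, ξ₃⟩
  rw [hF₂', hF₂, hexact, conj_coboundary_comp_eq_twistedCoboundary F₁₀ F₁₁ hF₁₀_mul,
    twistedCoboundary_apply_eq_semidirect _ _ _ _ _ ξ₂]
  simp only [hm, hβ, LinearMap.comp_apply]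

/-- If the 2-cocycle `F̄₂` is exact, `F̄₂ = dα`, then the associated 3-cochain
`F̃₂` on `G ⋉ V₀` is an exact group 3-cocycle: `F̃₂ = dβ` with
`β((g₁,ξ₁),(g₂,ξ₂)) = α(g₁)(F₁(g₁)(ξ₂))`. -/
theorem Ftilde2_exact_of_F2bar_exact
    {G : Type} [Group G] {V₀ V₁ : Type}
    [AddCommGroup V₀] [Module ℝ V₀] [AddCommGroup V₁] [Module ℝ V₁]
    -- the genuine actions F₁ on V₀ and V₁
    (F₁₀ : G → Module.End ℝ V₀) (F₁₁ : G → Module.End ℝ V₁)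
    (hF₁₀_one : F₁₀ 1 = 1) (hF₁₁_one : F₁₁ 1 = 1)
    (hF₁₀_mul : ∀ g₁ g₂, F₁₀ (g₁ * g₂) = F₁₀ g₁ * F₁₀ g₂)
    (hF₁₁_mul : ∀ g₁ g₂, F₁₁ (g₁ * g₂) = F₁₁ g₁ * F₁₁ g₂)
    -- F̄₂ is exact: F̄₂ = dα
    (α : G → (V₀ →ₗ[ℝ] V₁))
    (F₂bar : G → G → (V₀ →ₗ[ℝ] V₁))
    (hexact : ∀ g₁ g₂, F₂bar g₁ g₂
      = (F₁₁ g₁) ∘ₗ (α g₂) ∘ₗ (F₁₀ g₁⁻¹) - α (g₁ * g₂) + α g₁)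
    -- F₂ and the 3-cochain F̃₂ on the semidirect product G ⋉ V₀
    (F₂ : G → G → (V₀ →ₗ[ℝ] V₁))
    (hF₂ : ∀ g₁ g₂, F₂ g₁ g₂ = (F₂bar g₁ g₂) ∘ₗ (F₁₀ (g₁ * g₂)))
    (m : G × V₀ → G × V₀ → G × V₀)
    (hm : ∀ (g₁ g₂ : G) (ξ₁ ξ₂ : V₀),
      m (g₁, ξ₁) (g₂, ξ₂) = (g₁ * g₂, ξ₁ + F₁₀ g₁ ξ₂))
    (F₂' : G × V₀ → G × V₀ → G × V₀ → V₁)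
    (hF₂' : ∀ x₁ x₂ x₃ : G × V₀, F₂' x₁ x₂ x₃ = F₂ x₁.1 x₂.1 x₃.2)
    -- the 2-cochain β
    (β : G × V₀ → G × V₀ → V₁)
    (hβ : ∀ x₁ x₂ : G × V₀, β x₁ x₂ = α x₁.1 (F₁₀ x₁.1 x₂.2)) :
    -- F̃₂ = dβ
    ∀ x₁ x₂ x₃ : G × V₀,
      F₂' x₁ x₂ x₃
        = F₁₁ x₁.1 (β x₂ x₃) - β (m x₁ x₂) x₃ + β x₁ (m x₂ x₃) - β x₁ x₂ :=
  Ftilde2_exact_of_F2bar_exact_general F₁₀ F₁₁ hF₁₀_mul α F₂bar hexact F₂ hF₂ m hm F₂' hF₂' β hβ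
end

section
/- Let G be a group and (V₁ →d V₀, F₁, F₂) a unital 2-term representation up to homotopy of G. On the set G × V₀ × V₁ define horizontal multiplication (g₁,ξ,m)·(g₂,η,n) = (g₁g₂, ξ + F₁(g₁)η, m + F₁(g₁)n) and associator a_{(g₁,ξ),(g₂,η),(g₃,γ)} = (g₁g₂g₃, ξ + F₁(g₁)η + F₁(g₁g₂)γ, F₂(g₁,g₂)(γ)). Then the pentagon identity holds: a_{(g₁,ξ),(g₂,η),(g₃,γ)·(g₄,θ)} · a_{(g₁,ξ)·(g₂,η),(g₃,γ),(g₄,θ)} = ((g₁,ξ) · a_{(g₂,η),(g₃,γ),(g₄,θ)}) · a_{(g₁,ξ),(g₂,η)·(g₃,γ),(g₄,θ)} · (a_{(g₁,ξ),(g₂,η),(g₃,γ)} · (g₄,θ)). -/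
/-!
Objects and the group and `V₀` components of morphisms compose strictly, so both sides of the
pentagon have the same source, and the identity lives entirely in the `V₁` component. There it
is the pointwise form of the cocycle condition on `F₂`, after expanding `F₂ g₁ g₂` on the sum
`γ + F₁₀ g₃ θ`.
-/

theorem cocycle_apply {R G V₀ V₁ : Type*} [Semiring R] [Mul G]
    [AddCommGroup V₀] [Module R V₀] [AddCommGroup V₁] [Module R V₁]
    (F₁₀ : G → Module.End R V₀) (F₁₁ : G → Module.End R V₁) (F₂ : G → G → (V₀ →ₗ[R] V₁))
    {g₁ g₂ g₃ : G}
    (hclosed : (F₁₁ g₁) ∘ₗ F₂ g₂ g₃ - F₂ (g₁ * g₂) g₃ + F₂ g₁ (g₂ * g₃)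
      - F₂ g₁ g₂ ∘ₗ (F₁₀ g₃) = 0) (γ θ : V₀) :
    F₂ (g₁ * g₂) g₃ θ + F₂ g₁ g₂ (γ + F₁₀ g₃ θ)
      = F₂ g₁ g₂ γ + F₂ g₁ (g₂ * g₃) θ + F₁₁ g₁ (F₂ g₂ g₃ θ) := by
  have h := LinearMap.congr_fun hclosed θ
  simp only [LinearMap.sub_apply, LinearMap.add_apply, LinearMap.comp_apply,
    LinearMap.zero_apply] at h
  rw [map_add]
  linear_combination (norm := abel) -h

theorem semidirect_two_group_pentagon_general
    {G : Type} [Group G] {V₀ V₁ : Type}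
    [AddCommGroup V₀] [Module ℝ V₀] [AddCommGroup V₁] [Module ℝ V₁]
    (F₁₀ : G → Module.End ℝ V₀) (F₁₁ : G → Module.End ℝ V₁)
    (F₂ : G → G → (V₀ →ₗ[ℝ] V₁))
    (hclosed : ∀ g₁ g₂ g₃,
      (F₁₁ g₁) ∘ₗ F₂ g₂ g₃ - F₂ (g₁ * g₂) g₃ + F₂ g₁ (g₂ * g₃)
        - F₂ g₁ g₂ ∘ₗ (F₁₀ g₃) = 0)
    -- horizontal multiplication of objects
    (mo : G × V₀ → G × V₀ → G × V₀)
    (hmo : ∀ x y : G × V₀, mo x y = (x.1 * y.1, x.2 + F₁₀ x.1 y.2))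
    -- horizontal multiplication of morphisms
    (mh : G × V₀ × V₁ → G × V₀ × V₁ → G × V₀ × V₁)
    (hmh : ∀ a b : G × V₀ × V₁,
      mh a b = (a.1 * b.1, a.2.1 + F₁₀ a.1 b.2.1, a.2.2 + F₁₁ a.1 b.2.2))
    -- vertical composition of morphisms: `v a b` is `a` after `b`
    (v : G × V₀ × V₁ → G × V₀ × V₁ → G × V₀ × V₁)
    (hv : ∀ a b : G × V₀ × V₁, v a b = (b.1, b.2.1, b.2.2 + a.2.2))
    -- the associator
    (assoc : G × V₀ → G × V₀ → G × V₀ → G × V₀ × V₁)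
    (hassoc : ∀ x y z : G × V₀,
      assoc x y z = (x.1 * y.1 * z.1,
        x.2 + F₁₀ x.1 y.2 + F₁₀ (x.1 * y.1) z.2, F₂ x.1 y.1 z.2)) :
    -- the pentagon identity
    ∀ x y z w : G × V₀,
      v (assoc x y (mo z w)) (assoc (mo x y) z w)
      = v (mh (x.1, x.2, (0 : V₁)) (assoc y z w))
          (v (assoc x (mo y z) w) (mh (assoc x y z) (w.1, w.2, (0 : V₁)))) := by
  intro x y z w
  simp only [hmo, hmh, hv, hassoc, Prod.mk.injEq, map_zero, add_zero, zero_add]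
  exact ⟨by group, trivial, cocycle_apply F₁₀ F₁₁ F₂ (hclosed x.1 y.1 z.1) z.2 w.2⟩

/-- For the semidirect product Lie 2-group of a group `G` with a unital 2-term
representation up to homotopy, the pentagon identity for the associator holds. -/
theorem semidirect_two_group_pentagon
    {G : Type} [Group G] {V₀ V₁ : Type}
    [AddCommGroup V₀] [Module ℝ V₀] [AddCommGroup V₁] [Module ℝ V₁]
    (d : V₁ →ₗ[ℝ] V₀)
    (F₁₀ : G → Module.End ℝ V₀) (F₁₁ : G → Module.End ℝ V₁)
    (hF₁₀_one : F₁₀ 1 = 1) (hF₁₁_one : F₁₁ 1 = 1)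
    (hcompat : ∀ g, d ∘ₗ (F₁₁ g) = (F₁₀ g) ∘ₗ d)
    (F₂ : G → G → (V₀ →ₗ[ℝ] V₁))
    (hfail₀ : ∀ g₁ g₂, F₁₀ g₁ * F₁₀ g₂ - F₁₀ (g₁ * g₂) = d ∘ₗ F₂ g₁ g₂)
    (hfail₁ : ∀ g₁ g₂, F₁₁ g₁ * F₁₁ g₂ - F₁₁ (g₁ * g₂) = F₂ g₁ g₂ ∘ₗ d)
    (hclosed : ∀ g₁ g₂ g₃,
      (F₁₁ g₁) ∘ₗ F₂ g₂ g₃ - F₂ (g₁ * g₂) g₃ + F₂ g₁ (g₂ * g₃)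
        - F₂ g₁ g₂ ∘ₗ (F₁₀ g₃) = 0)
    -- horizontal multiplication of objects
    (mo : G × V₀ → G × V₀ → G × V₀)
    (hmo : ∀ x y : G × V₀, mo x y = (x.1 * y.1, x.2 + F₁₀ x.1 y.2))
    -- horizontal multiplication of morphisms
    (mh : G × V₀ × V₁ → G × V₀ × V₁ → G × V₀ × V₁)
    (hmh : ∀ a b : G × V₀ × V₁,
      mh a b = (a.1 * b.1, a.2.1 + F₁₀ a.1 b.2.1, a.2.2 + F₁₁ a.1 b.2.2))
    -- vertical composition of morphisms: `v a b` is `a` after `b`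
    (v : G × V₀ × V₁ → G × V₀ × V₁ → G × V₀ × V₁)
    (hv : ∀ a b : G × V₀ × V₁, v a b = (b.1, b.2.1, b.2.2 + a.2.2))
    -- the associator
    (assoc : G × V₀ → G × V₀ → G × V₀ → G × V₀ × V₁)
    (hassoc : ∀ x y z : G × V₀,
      assoc x y z = (x.1 * y.1 * z.1,
        x.2 + F₁₀ x.1 y.2 + F₁₀ (x.1 * y.1) z.2, F₂ x.1 y.1 z.2)) :
    -- the pentagon identity
    ∀ x y z w : G × V₀,
      v (assoc x y (mo z w)) (assoc (mo x y) z w)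
      = v (mh (x.1, x.2, (0 : V₁)) (assoc y z w))
          (v (assoc x (mo y z) w) (mh (assoc x y z) (w.1, w.2, (0 : V₁)))) :=
  semidirect_two_group_pentagon_general F₁₀ F₁₁ F₂ hclosed mo hmo mh hmh v hv assoc hassoc
end

section
/- Let G be a group and (V₁ →d V₀, F₁, F₂) a unital 2-term representation up to homotopy of G. The associator a_{(g₁,ξ),(g₂,η),(g₃,γ)} = (g₁g₂g₃, ξ + F₁(g₁)η + F₁(g₁g₂)γ, F₂(g₁,g₂)(γ)) is natural: for all morphisms (gᵢ, ξᵢ, mᵢ), composing a at the shifted objects with the product of the morphisms (associating to the left) equals the product associating to the right composed with a at the original objects; concretely, m + F₁(g₁)(n) + F₁(g₁g₂)(k) + F₂(g₁,g₂)(γ + dk) = m + F₁(g₁)(n) + F₁(g₁)F₁(g₂)(k) + F₂(g₁,g₂)(γ). -/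
/-! The naturality square commutes on the `G`- and `V₀`-components on the nose; on the
`V₁`-component the two sides differ by `F₁(g₁g₂)k + F₂(g₁,g₂)(dk)` versus `F₁(g₁)F₁(g₂)k`,
and these agree because `F₂` is the homotopy `F₁(g₁)F₁(g₂) - F₁(g₁g₂) = F₂(g₁,g₂) ∘ d` on `V₁`. -/

theorem LinearMap.comp_apply_eq_sub_of_mul_sub_eq_comp {R M N : Type*} [Semiring R]
    [AddCommGroup M] [Module R M] [AddCommGroup N] [Module R N]
    {A B C : Module.End R M} {F : N →ₗ[R] M} {d : M →ₗ[R] N}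
    (h : A * B - C = F ∘ₗ d) (k : M) : F (d k) = A (B k) - C k := by
  simpa using (LinearMap.congr_fun h k).symm

theorem associator_naturality_V₁ {R G V₀ V₁ : Type*} [Semiring R] [Mul G]
    [AddCommGroup V₀] [Module R V₀] [AddCommGroup V₁] [Module R V₁] {d : V₁ →ₗ[R] V₀}
    {F₁₁ : G → Module.End R V₁} {F₂ : G → G → (V₀ →ₗ[R] V₁)}
    (hfail₁ : ∀ g₁ g₂, F₁₁ g₁ * F₁₁ g₂ - F₁₁ (g₁ * g₂) = F₂ g₁ g₂ ∘ₗ d)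
    (g₁ g₂ : G) (γ : V₀) (m n k : V₁) :
    m + F₁₁ g₁ n + F₁₁ (g₁ * g₂) k + F₂ g₁ g₂ (γ + d k)
      = m + F₁₁ g₁ n + F₁₁ g₁ (F₁₁ g₂ k) + F₂ g₁ g₂ γ := by
  rw [map_add, LinearMap.comp_apply_eq_sub_of_mul_sub_eq_comp (hfail₁ g₁ g₂)]
  abel

theorem semidirect_two_group_associator_natural_general
    {G : Type} [Group G] {V₀ V₁ : Type}
    [AddCommGroup V₀] [Module ℝ V₀] [AddCommGroup V₁] [Module ℝ V₁]
    (d : V₁ →ₗ[ℝ] V₀)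
    (F₁₀ : G → Module.End ℝ V₀) (F₁₁ : G → Module.End ℝ V₁)
    (F₂ : G → G → (V₀ →ₗ[ℝ] V₁))
    (hfail₁ : ∀ g₁ g₂, F₁₁ g₁ * F₁₁ g₂ - F₁₁ (g₁ * g₂) = F₂ g₁ g₂ ∘ₗ d)
    (mh : G × V₀ × V₁ → G × V₀ × V₁ → G × V₀ × V₁)
    (hmh : ∀ a b : G × V₀ × V₁,
      mh a b = (a.1 * b.1, a.2.1 + F₁₀ a.1 b.2.1, a.2.2 + F₁₁ a.1 b.2.2))
    (v : G × V₀ × V₁ → G × V₀ × V₁ → G × V₀ × V₁)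
    (hv : ∀ a b : G × V₀ × V₁, v a b = (b.1, b.2.1, b.2.2 + a.2.2))
    (assoc : G × V₀ → G × V₀ → G × V₀ → G × V₀ × V₁)
    (hassoc : ∀ x y z : G × V₀,
      assoc x y z = (x.1 * y.1 * z.1,
        x.2 + F₁₀ x.1 y.2 + F₁₀ (x.1 * y.1) z.2, F₂ x.1 y.1 z.2)) :
    -- naturality of the associator
    (∀ (g₁ g₂ g₃ : G) (ξ η γ : V₀) (m n k : V₁),
      v (assoc (g₁, ξ + d m) (g₂, η + d n) (g₃, γ + d k))
          (mh (mh (g₁, ξ, m) (g₂, η, n)) (g₃, γ, k))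
      = v (mh (g₁, ξ, m) (mh (g₂, η, n) (g₃, γ, k)))
          (assoc (g₁, ξ) (g₂, η) (g₃, γ))) ∧
    -- concretely, in the V₁ component:
    (∀ (g₁ g₂ : G) (γ : V₀) (m n k : V₁),
      m + F₁₁ g₁ n + F₁₁ (g₁ * g₂) k + F₂ g₁ g₂ (γ + d k)
        = m + F₁₁ g₁ n + F₁₁ g₁ (F₁₁ g₂ k) + F₂ g₁ g₂ γ) := by
  refine ⟨fun g₁ g₂ g₃ ξ η γ m n k => ?_, associator_naturality_V₁ hfail₁⟩
  have hV₁ := associator_naturality_V₁ hfail₁ g₁ g₂ γ m n k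
  simp only [hv, hmh, hassoc, Prod.mk.injEq, true_and]
  rw [hV₁, map_add]
  abel

/-- Naturality of the associator of the semidirect product Lie 2-group:
composing the associator at the shifted objects with the left-associated
product of morphisms equals the right-associated product composed with the
associator at the original objects; concretely,
`m + F₁(g₁)n + F₁(g₁g₂)k + F₂(g₁,g₂)(γ + dk)
  = m + F₁(g₁)n + F₁(g₁)F₁(g₂)k + F₂(g₁,g₂)(γ)`. -/
theorem semidirect_two_group_associator_natural
    {G : Type} [Group G] {V₀ V₁ : Type}
    [AddCommGroup V₀] [Module ℝ V₀] [AddCommGroup V₁] [Module ℝ V₁]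
    (d : V₁ →ₗ[ℝ] V₀)
    (F₁₀ : G → Module.End ℝ V₀) (F₁₁ : G → Module.End ℝ V₁)
    (hF₁₀_one : F₁₀ 1 = 1) (hF₁₁_one : F₁₁ 1 = 1)
    (hcompat : ∀ g, d ∘ₗ (F₁₁ g) = (F₁₀ g) ∘ₗ d)
    (F₂ : G → G → (V₀ →ₗ[ℝ] V₁))
    (hfail₀ : ∀ g₁ g₂, F₁₀ g₁ * F₁₀ g₂ - F₁₀ (g₁ * g₂) = d ∘ₗ F₂ g₁ g₂)
    (hfail₁ : ∀ g₁ g₂, F₁₁ g₁ * F₁₁ g₂ - F₁₁ (g₁ * g₂) = F₂ g₁ g₂ ∘ₗ d)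
    (hclosed : ∀ g₁ g₂ g₃,
      (F₁₁ g₁) ∘ₗ F₂ g₂ g₃ - F₂ (g₁ * g₂) g₃ + F₂ g₁ (g₂ * g₃)
        - F₂ g₁ g₂ ∘ₗ (F₁₀ g₃) = 0)
    (mh : G × V₀ × V₁ → G × V₀ × V₁ → G × V₀ × V₁)
    (hmh : ∀ a b : G × V₀ × V₁,
      mh a b = (a.1 * b.1, a.2.1 + F₁₀ a.1 b.2.1, a.2.2 + F₁₁ a.1 b.2.2))
    (v : G × V₀ × V₁ → G × V₀ × V₁ → G × V₀ × V₁)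
    (hv : ∀ a b : G × V₀ × V₁, v a b = (b.1, b.2.1, b.2.2 + a.2.2))
    (assoc : G × V₀ → G × V₀ → G × V₀ → G × V₀ × V₁)
    (hassoc : ∀ x y z : G × V₀,
      assoc x y z = (x.1 * y.1 * z.1,
        x.2 + F₁₀ x.1 y.2 + F₁₀ (x.1 * y.1) z.2, F₂ x.1 y.1 z.2)) :
    -- naturality of the associator
    (∀ (g₁ g₂ g₃ : G) (ξ η γ : V₀) (m n k : V₁),
      v (assoc (g₁, ξ + d m) (g₂, η + d n) (g₃, γ + d k))
          (mh (mh (g₁, ξ, m) (g₂, η, n)) (g₃, γ, k))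
      = v (mh (g₁, ξ, m) (mh (g₂, η, n) (g₃, γ, k)))
          (assoc (g₁, ξ) (g₂, η) (g₃, γ))) ∧
    -- concretely, in the V₁ component:
    (∀ (g₁ g₂ : G) (γ : V₀) (m n k : V₁),
      m + F₁₁ g₁ n + F₁₁ (g₁ * g₂) k + F₂ g₁ g₂ (γ + d k)
        = m + F₁₁ g₁ n + F₁₁ g₁ (F₁₁ g₂ k) + F₂ g₁ g₂ γ) :=
  semidirect_two_group_associator_natural_general d F₁₀ F₁₁ F₂ hfail₁ mh hmh v hv assoc hassoc
end

section
/- Let G be a group and (V₁ →d V₀, F₁, F₂) a unital 2-term representation up to homotopy of G with F₂(g, g⁻¹) defined for all g. Then the unit morphism i_{(g,ξ)} = (1_G, 0, −F₂(g,g⁻¹)(ξ)) is a morphism from (1_G, 0) to (g,ξ)·inv(g,ξ) where inv(g,ξ) = (g⁻¹, −F₁(g⁻¹)(ξ)), and naturality holds: for any morphism (g,ξ,m), ((g,ξ,m)·inv(g,ξ,m))·i_{(g,ξ)} = i_{(g,ξ+dm)}; concretely F₂(g,g⁻¹)(dm) = F₁(g)F₁(g⁻¹)(m) − m. -/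
theorem map_mul_map_inv_sub_map_mul_inv_apply {R M G : Type*} [Semiring R] [AddCommGroup M]
    [Module R M] [Group G] {F : G → Module.End R M} (hF : F 1 = 1) (g : G) (x : M) :
    (F g * F g⁻¹ - F (g * g⁻¹)) x = F g (F g⁻¹ x) - x := by
  simp [hF]

theorem semidirect_two_group_unit_natural_general
    {G : Type} [Group G] {V₀ V₁ : Type}
    [AddCommGroup V₀] [Module ℝ V₀] [AddCommGroup V₁] [Module ℝ V₁]
    (d : V₁ →ₗ[ℝ] V₀)
    (F₁₀ : G → Module.End ℝ V₀) (F₁₁ : G → Module.End ℝ V₁)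
    (hF₁₀_one : F₁₀ 1 = 1) (hF₁₁_one : F₁₁ 1 = 1)
    (F₂ : G → G → (V₀ →ₗ[ℝ] V₁))
    (hfail₀ : ∀ g₁ g₂, F₁₀ g₁ * F₁₀ g₂ - F₁₀ (g₁ * g₂) = d ∘ₗ F₂ g₁ g₂)
    (hfail₁ : ∀ g₁ g₂, F₁₁ g₁ * F₁₁ g₂ - F₁₁ (g₁ * g₂) = F₂ g₁ g₂ ∘ₗ d) :
    -- the unit i_{(g,ξ)} = (1_G, 0, −F₂(g,g⁻¹)(ξ)) is a morphism from
    -- (1_G, 0) to (g,ξ)·ₕ inv(g,ξ) = (g·g⁻¹, ξ + F₁(g)(−F₁(g⁻¹)(ξ)))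
    (∀ (g : G) (ξ : V₀),
      ((1 : G), (0 : V₀) + d (-(F₂ g g⁻¹ ξ)))
        = (g * g⁻¹, ξ + F₁₀ g (-(F₁₀ g⁻¹ ξ)))) ∧
    -- naturality of the unit, concretely:
    (∀ (g : G) (m : V₁),
      F₂ g g⁻¹ (d m) = F₁₁ g (F₁₁ g⁻¹ m) - m) := by
  refine ⟨fun g ξ => ?_, fun g m => ?_⟩
  · have hunit : d (F₂ g g⁻¹ ξ) = F₁₀ g (F₁₀ g⁻¹ ξ) - ξ := by
      rw [← map_mul_map_inv_sub_map_mul_inv_apply hF₁₀_one, hfail₀]; rfl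
    refine Prod.ext (mul_inv_cancel g).symm ?_
    simp only [map_neg, hunit]
    abel
  · rw [← map_mul_map_inv_sub_map_mul_inv_apply hF₁₁_one, hfail₁]; rfl

/-- The unit `i_{(g,ξ)} = (1_G, 0, −F₂(g,g⁻¹)(ξ))` of the semidirect product
Lie 2-group is a morphism from `(1_G, 0)` to `(g,ξ)·inv(g,ξ)`, and it is
natural: concretely `F₂(g,g⁻¹)(dm) = F₁(g)F₁(g⁻¹)(m) − m`. -/
theorem semidirect_two_group_unit_natural
    {G : Type} [Group G] {V₀ V₁ : Type}
    [AddCommGroup V₀] [Module ℝ V₀] [AddCommGroup V₁] [Module ℝ V₁]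
    (d : V₁ →ₗ[ℝ] V₀)
    (F₁₀ : G → Module.End ℝ V₀) (F₁₁ : G → Module.End ℝ V₁)
    (hF₁₀_one : F₁₀ 1 = 1) (hF₁₁_one : F₁₁ 1 = 1)
    (hcompat : ∀ g, d ∘ₗ (F₁₁ g) = (F₁₀ g) ∘ₗ d)
    (F₂ : G → G → (V₀ →ₗ[ℝ] V₁))
    (hfail₀ : ∀ g₁ g₂, F₁₀ g₁ * F₁₀ g₂ - F₁₀ (g₁ * g₂) = d ∘ₗ F₂ g₁ g₂)
    (hfail₁ : ∀ g₁ g₂, F₁₁ g₁ * F₁₁ g₂ - F₁₁ (g₁ * g₂) = F₂ g₁ g₂ ∘ₗ d)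
    (hclosed : ∀ g₁ g₂ g₃,
      (F₁₁ g₁) ∘ₗ F₂ g₂ g₃ - F₂ (g₁ * g₂) g₃ + F₂ g₁ (g₂ * g₃)
        - F₂ g₁ g₂ ∘ₗ (F₁₀ g₃) = 0) :
    -- the unit i_{(g,ξ)} = (1_G, 0, −F₂(g,g⁻¹)(ξ)) is a morphism from
    -- (1_G, 0) to (g,ξ)·ₕ inv(g,ξ) = (g·g⁻¹, ξ + F₁(g)(−F₁(g⁻¹)(ξ)))
    (∀ (g : G) (ξ : V₀),
      ((1 : G), (0 : V₀) + d (-(F₂ g g⁻¹ ξ)))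
        = (g * g⁻¹, ξ + F₁₀ g (-(F₁₀ g⁻¹ ξ)))) ∧
    -- naturality of the unit, concretely:
    (∀ (g : G) (m : V₁),
      F₂ g g⁻¹ (d m) = F₁₁ g (F₁₁ g⁻¹ m) - m) :=
  semidirect_two_group_unit_natural_general d F₁₀ F₁₁ hF₁₀_one hF₁₁_one F₂ hfail₀ hfail₁
end
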